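/- Let d ≥ 1, 1 ≤ k ≤ n, and let φ be a pure state (rank-one projection onto a unit vector) on ℂ^d. Then the universal quantum cloning machine satisfies the fidelity bound F(φ^{⊗n}, C_{k→n}(φ^{⊗k})) ≥ d[k]/d[n]. -/

import Mathlib

open scoped BigOperators Matrix Kronecker ComplexOrder
open Matrix

noncomputable section

variable {ι : Type*} [Fintype ι] [DecidableEq ι]

/-- Apply a real-scalar function to a Hermitian matrix via the spectral decomposition
(junk value `0` on non-Hermitian matrices). -/
def hermFun (f : ℝ → ℂ) (A : Matrix ι ι ℂ) : Matrix ι ι ℂ :=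
  if hA : A.IsHermitian then
    (hA.eigenvectorUnitary : Matrix ι ι ℂ) * Matrix.diagonal (fun i => f (hA.eigenvalues i)) *
      (star (hA.eigenvectorUnitary : Matrix ι ι ℂ))
  else 0

/-- Matrix logarithm (on the support; natural logarithm). -/
def matLog (A : Matrix ι ι ℂ) : Matrix ι ι ℂ := hermFun (fun x => (Real.log x : ℂ)) A

/-- Matrix square root of a Hermitian (e.g. positive semidefinite) matrix. -/
def matSqrt (A : Matrix ι ι ℂ) : Matrix ι ι ℂ := hermFun (fun x => (Real.sqrt x : ℂ)) A

/-- Complex matrix power with the Moore–Penrose convention (inverse powers taken on the support). -/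
def matCPow (A : Matrix ι ι ℂ) (z : ℂ) : Matrix ι ι ℂ :=
  hermFun (fun x => if x = 0 then 0 else (x : ℂ) ^ z) A

/-- A state (density operator). -/
def IsState (ρ : Matrix ι ι ℂ) : Prop := ρ.PosSemidef ∧ ρ.trace = 1

/-- Quantum relative entropy `D(ρ‖σ) = tr[ρ (log ρ - log σ)]`. -/
def relEnt (ρ σ : Matrix ι ι ℂ) : ℝ := ((ρ * (matLog ρ - matLog σ)).trace).re

/-- von Neumann entropy `H(ρ) = -tr[ρ log ρ]`. -/
def vnEntropy (ρ : Matrix ι ι ℂ) : ℝ := -((ρ * matLog ρ).trace).re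

/-- Trace norm `‖X‖₁ = tr √(X† X)`. -/
def traceNorm (X : Matrix ι ι ℂ) : ℝ := ((matSqrt (Xᴴ * X)).trace).re

/-- Fidelity `F(ρ,σ) = ‖√ρ √σ‖₁²`. -/
def fidelity (ρ σ : Matrix ι ι ℂ) : ℝ := (traceNorm (matSqrt ρ * matSqrt σ)) ^ 2

variable {A B : Type*} [Fintype A] [DecidableEq A] [Fintype B] [DecidableEq B]

/-- The extension `Λ ⊗ id_m` of a map on matrices. -/
def extendChan (Λ : Matrix A A ℂ →ₗ[ℂ] Matrix B B ℂ) {m : Type*} [Fintype m]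
    (M : Matrix (A × m) (A × m) ℂ) : Matrix (B × m) (B × m) ℂ :=
  fun p q => Λ (fun a a' => M (a, p.2) (a', q.2)) p.1 q.1

/-- A quantum channel: a completely positive trace-preserving linear map. -/
structure IsQChannel (Λ : Matrix A A ℂ →ₗ[ℂ] Matrix B B ℂ) : Prop where
  tp : ∀ M, (Λ M).trace = M.trace
  cp : ∀ (m : ℕ) (M : Matrix (A × Fin m) (A × Fin m) ℂ), M.PosSemidef →
    (extendChan Λ M).PosSemidef

/-- The marginal of a state of `n` systems on the `j`-th system. -/
def marginal {n : ℕ} (ρ : Matrix (Fin n → ι) (Fin n → ι) ℂ) (j : Fin n) :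
    Matrix ι ι ℂ :=
  fun a b => ∑ f : {i : Fin n // i ≠ j} → ι,
      ρ (fun i => if h : i = j then a else f ⟨i, h⟩)
        (fun i => if h : i = j then b else f ⟨i, h⟩)

/-- `n`-fold tensor power of a matrix. -/
def tpow (σ : Matrix ι ι ℂ) (n : ℕ) : Matrix (Fin n → ι) (Fin n → ι) ℂ :=
  fun f g => ∏ i, σ (f i) (g i)

/-- Partial trace over the last `n - k` tensor factors. -/
def ptraceLast {n k : ℕ} (h : k ≤ n) (ρ : Matrix (Fin n → ι) (Fin n → ι) ℂ) :
    Matrix (Fin k → ι) (Fin k → ι) ℂ :=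
  fun a b => ∑ z : Fin (n - k) → ι,
    ρ (fun i => if h' : (i : ℕ) < k then a ⟨i, h'⟩ else z ⟨(i : ℕ) - k, by have := i.isLt; omega⟩)
      (fun i => if h' : (i : ℕ) < k then b ⟨i, h'⟩ else z ⟨(i : ℕ) - k, by have := i.isLt; omega⟩)

/-- Permutation matrix acting on `(ℂ^d)^{⊗ n}`. -/
def permMat (d n : ℕ) (π : Equiv.Perm (Fin n)) :
    Matrix (Fin n → Fin d) (Fin n → Fin d) ℂ :=
  fun f g => if g = f ∘ π then 1 else 0

/-- Orthogonal projection onto the symmetric subspace of `(ℂ^d)^{⊗ n}`. -/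
def symProj (d n : ℕ) : Matrix (Fin n → Fin d) (Fin n → Fin d) ℂ :=
  ((n.factorial : ℂ))⁻¹ • ∑ π : Equiv.Perm (Fin n), permMat d n π

/-- Dimension `d[n] = C(d+n-1, n)` of the symmetric subspace. -/
def dsym (d n : ℕ) : ℕ := (d + n - 1).choose n

/-- Maximally mixed state on the symmetric subspace. -/
def piSym (d n : ℕ) : Matrix (Fin n → Fin d) (Fin n → Fin d) ℂ :=
  ((dsym d n : ℂ))⁻¹ • symProj d n

/-- Tensoring a matrix on the first `k` factors with the identity on the last `n-k` factors. -/
def extendId {d k n : ℕ} (h : k ≤ n) (M : Matrix (Fin k → Fin d) (Fin k → Fin d) ℂ) :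
    Matrix (Fin n → Fin d) (Fin n → Fin d) ℂ :=
  fun f g => (if ∀ i : Fin n, k ≤ (i : ℕ) → f i = g i then 1 else 0) *
    M (fun i => f (Fin.castLE h i)) (fun i => g (Fin.castLE h i))

/-- The universal quantum cloning machine `C_{k→n}`. -/
def uqcm (d : ℕ) {k n : ℕ} (h : k ≤ n) (ω : Matrix (Fin k → Fin d) (Fin k → Fin d) ℂ) :
    Matrix (Fin n → Fin d) (Fin n → Fin d) ℂ :=
  (((dsym d k : ℂ)) / ((dsym d n : ℂ))) •
    (symProj d n * extendId h (symProj d k * ω * symProj d k) * symProj d n)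

/-- The symmetrized partial trace channel `P_{n→k}`. -/
def symPTrace (d : ℕ) {k n : ℕ} (h : k ≤ n) (ω : Matrix (Fin n → Fin d) (Fin n → Fin d) ℂ) :
    Matrix (Fin k → Fin d) (Fin k → Fin d) ℂ :=
  symProj d k * ptraceLast h (symProj d n * ω * symProj d n) * symProj d k

/-- Orthogonal projection onto the antisymmetric subspace of `(ℂ^d)^{⊗ n}`. -/
def antiProj (d n : ℕ) : Matrix (Fin n → Fin d) (Fin n → Fin d) ℂ :=
  ((n.factorial : ℂ))⁻¹ • ∑ π : Equiv.Perm (Fin n), ((Equiv.Perm.sign π : ℤ) : ℂ) • permMat d n π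

/-- Maximally mixed state on the antisymmetric subspace. -/
def piAnti (d n : ℕ) : Matrix (Fin n → Fin d) (Fin n → Fin d) ℂ :=
  ((d.choose n : ℂ))⁻¹ • antiProj d n

/-- The antisymmetric cloning machine. -/
def antiClone (d : ℕ) {k n : ℕ} (h : k ≤ n) (ω : Matrix (Fin k → Fin d) (Fin k → Fin d) ℂ) :
    Matrix (Fin n → Fin d) (Fin n → Fin d) ℂ :=
  (((d.choose k : ℂ)) / ((d.choose n : ℂ))) •
    (antiProj d n * extendId h (antiProj d k * ω * antiProj d k) * antiProj d n)

/-- The antisymmetrized partial trace. -/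
def antiPTrace (d : ℕ) {k n : ℕ} (h : k ≤ n) (ω : Matrix (Fin n → Fin d) (Fin n → Fin d) ℂ) :
    Matrix (Fin k → Fin d) (Fin k → Fin d) ℂ :=
  antiProj d k * ptraceLast h (antiProj d n * ω * antiProj d n) * antiProj d k

/-- Rank-one projection (outer product) `|v⟩⟨v|`. -/
def outer {α : Type*} (v : α → ℂ) : Matrix α α ℂ :=
  fun x y => v x * (starRingEnd ℂ) (v y)

/-- Slater determinant vector `φ₁ ∧ ⋯ ∧ φ_k`. -/
def slater {d k : ℕ} (w : Fin k → (Fin d → ℂ)) : (Fin k → Fin d) → ℂ :=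
  fun f => ((Real.sqrt k.factorial : ℂ))⁻¹ *
    ∑ π : Equiv.Perm (Fin k), ((Equiv.Perm.sign π : ℤ) : ℂ) * ∏ i, w (π i) (f i)

/-- Partial trace over the second tensor factor. -/
def trB {ιA ιB : Type*} [Fintype ιB] (ρ : Matrix (ιA × ιB) (ιA × ιB) ℂ) : Matrix ιA ιA ℂ :=
  fun a a' => ∑ b, ρ (a, b) (a', b)

/-- Partial trace over the first tensor factor. -/
def trA {ιA ιB : Type*} [Fintype ιA] (ρ : Matrix (ιA × ιB) (ιA × ιB) ℂ) : Matrix ιB ιB ℂ :=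
  fun b b' => ∑ a, ρ (a, b) (a, b')

/-- The probability density `β(t) = (π/2)(1 + cosh(π t))⁻¹`. -/
def betaDens (t : ℝ) : ℝ := (Real.pi / 2) * (1 + Real.cosh (Real.pi * t))⁻¹

/-- Rotated Petz recovery map `R^t_{A,X}`, mapping operators on `B` to operators on `A ⊗ B`. -/
def petzA {ιA ιB : Type*} [Fintype ιA] [DecidableEq ιA] [Fintype ιB] [DecidableEq ιB]
    (t : ℝ) (X : Matrix (ιA × ιB) (ιA × ιB) ℂ) (Y : Matrix ιB ιB ℂ) :
    Matrix (ιA × ιB) (ιA × ιB) ℂ :=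
  matCPow X ((1 + t * Complex.I) / 2) *
    ((1 : Matrix ιA ιA ℂ) ⊗ₖ
      (matCPow (trA X) (-(1 + t * Complex.I) / 2) * Y * matCPow (trA X) (-(1 - t * Complex.I) / 2))) *
    matCPow X ((1 - t * Complex.I) / 2)

/-- Rotated Petz recovery map `R^t_{B,X}`, mapping operators on `A` to operators on `A ⊗ B`. -/
def petzB {ιA ιB : Type*} [Fintype ιA] [DecidableEq ιA] [Fintype ιB] [DecidableEq ιB]
    (t : ℝ) (X : Matrix (ιA × ιB) (ιA × ιB) ℂ) (Y : Matrix ιA ιA ℂ) :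
    Matrix (ιA × ιB) (ιA × ιB) ℂ :=
  matCPow X ((1 + t * Complex.I) / 2) *
    ((matCPow (trB X) (-(1 + t * Complex.I) / 2) * Y * matCPow (trB X) (-(1 - t * Complex.I) / 2)) ⊗ₖ
      (1 : Matrix ιB ιB ℂ)) *
    matCPow X ((1 - t * Complex.I) / 2)

/-- Cloning map between two general subspaces, given by their orthogonal projections. -/
def genClone {d k n : ℕ} (h : k ≤ n) (dX dY : ℕ)
    (PX : Matrix (Fin n → Fin d) (Fin n → Fin d) ℂ)
    (PY : Matrix (Fin k → Fin d) (Fin k → Fin d) ℂ)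
    (ω : Matrix (Fin k → Fin d) (Fin k → Fin d) ℂ) :
    Matrix (Fin n → Fin d) (Fin n → Fin d) ℂ :=
  (((dY : ℂ)) / ((dX : ℂ))) • (PX * extendId h (PY * ω * PY) * PX)

/-- Partial trace channel between two general subspaces. -/
def genPTrace {d k n : ℕ} (h : k ≤ n)
    (PX : Matrix (Fin n → Fin d) (Fin n → Fin d) ℂ)
    (PY : Matrix (Fin k → Fin d) (Fin k → Fin d) ℂ)
    (ω : Matrix (Fin n → Fin d) (Fin n → Fin d) ℂ) :
    Matrix (Fin k → Fin d) (Fin k → Fin d) ℂ :=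
  PY * ptraceLast h (PX * ω * PX) * PY

end

/-! The tensor power `u^{⊗n}` is symmetric, and `|u^{⊗k}⟩⟨u^{⊗k}| ⊗ I^{⊗(n-k)}` fixes it, so it is
an eigenvector of `C_{k→n}(φ^{⊗k})` with eigenvalue `d[k]/d[n]`. For a pure state `ρ = |v⟩⟨v|` and
a Hermitian `σ` with `σ v = μ v`, the spectral calculus gives `√σ v = √μ v`, hence
`(√ρ √σ)† (√ρ √σ) = μ ρ` and `F(ρ, σ) = μ`: the bound holds with equality. -/

section Outer

variable {α : Type*}

lemma outer_eq_vecMulVec (v : α → ℂ) : outer v = vecMulVec v (star v) := rfl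

lemma isHermitian_outer (v : α → ℂ) : (outer v).IsHermitian := by
  simp [IsHermitian, outer_eq_vecMulVec]

lemma outer_ofReal_smul (r : ℝ) (v : α → ℂ) :
    outer ((r : ℂ) • v) = ((r ^ 2 : ℝ) : ℂ) • outer v := by
  ext x y
  simp [outer]
  ring

variable [Fintype α]

lemma outer_mulVec (v w : α → ℂ) : outer v *ᵥ w = (star v ⬝ᵥ w) • v := by
  simp [outer_eq_vecMulVec, vecMulVec_mulVec]

lemma outer_mul_outer_self {v : α → ℂ} (hv : star v ⬝ᵥ v = 1) : outer v * outer v = outer v := by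
  rw [outer_eq_vecMulVec, vecMulVec_mul_vecMulVec, hv, one_smul]

lemma mul_outer_mul_conjTranspose (S : Matrix α α ℂ) (v : α → ℂ) :
    S * outer v * Sᴴ = outer (S *ᵥ v) := by
  rw [outer_eq_vecMulVec, mul_vecMulVec, vecMulVec_mul, ← star_mulVec, outer_eq_vecMulVec]

lemma trace_outer (v : α → ℂ) : (outer v).trace = star v ⬝ᵥ v := by
  rw [outer_eq_vecMulVec, trace_vecMulVec, dotProduct_comm]

end Outer

section SpectralCalculus

variable {ι : Type*} [Fintype ι] [DecidableEq ι]

lemma diagonal_comp_mulVec_of_mulVec_eq_smul {l : ι → ℝ} {μ : ℝ} {y : ι → ℂ}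
    (hy : diagonal (fun i => (l i : ℂ)) *ᵥ y = (μ : ℂ) • y) (f : ℝ → ℂ) :
    diagonal (fun i => f (l i)) *ᵥ y = f μ • y := by
  ext i
  have hi := congrFun hy i
  simp only [mulVec_diagonal, Pi.smul_apply, smul_eq_mul] at hi ⊢
  by_cases hyi : y i = 0
  · simp [hyi]
  · rw [show l i = μ by exact_mod_cast mul_right_cancel₀ hyi hi]

lemma hermFun_mulVec_of_mulVec_eq_smul {A : Matrix ι ι ℂ} (hA : A.IsHermitian) (f : ℝ → ℂ)
    {μ : ℝ} {v : ι → ℂ} (hv : A *ᵥ v = (μ : ℂ) • v) : hermFun f A *ᵥ v = f μ • v := by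
  set U : Matrix ι ι ℂ := (hA.eigenvectorUnitary : Matrix ι ι ℂ)
  have hUU : star U * U = 1 := (mem_unitaryGroup_iff').mp hA.eigenvectorUnitary.2
  have hUU' : U * star U = 1 := (mem_unitaryGroup_iff).mp hA.eigenvectorUnitary.2
  have hA' : A = U * diagonal (fun i => (hA.eigenvalues i : ℂ)) * star U := by
    simpa [Function.comp_def] using hA.spectral_theorem
  have hy : diagonal (fun i => (hA.eigenvalues i : ℂ)) *ᵥ (star U *ᵥ v)
      = (μ : ℂ) • (star U *ᵥ v) :=
    calc _ = (star U * (U * diagonal (fun i => (hA.eigenvalues i : ℂ)) * star U)) *ᵥ v := by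
          rw [mulVec_mulVec, ← mul_assoc, ← mul_assoc, hUU, one_mul]
      _ = (μ : ℂ) • (star U *ᵥ v) := by rw [← hA', ← mulVec_mulVec, hv, mulVec_smul]
  rw [hermFun, dif_pos hA, ← mulVec_mulVec, ← mulVec_mulVec,
    diagonal_comp_mulVec_of_mulVec_eq_smul hy f, mulVec_smul, mulVec_mulVec, hUU', one_mulVec]

lemma hermFun_smul_outer {f : ℝ → ℂ} (hf : f 0 = 0) {v : ι → ℂ} (hv : star v ⬝ᵥ v = 1) (c : ℝ) :
    hermFun f ((c : ℂ) • outer v) = f c • outer v := by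
  have hA : ((c : ℂ) • outer v).IsHermitian := by
    simp [IsHermitian, conjTranspose_smul, (isHermitian_outer v).eq]
  refine Matrix.toLin'.injective (LinearMap.ext fun w => ?_)
  simp only [toLin'_apply]
  set a := star v ⬝ᵥ w
  -- `w - a • v` is an eigenvector for the eigenvalue `0`, on which `hermFun f` acts by `f 0 = 0`.
  have hperp : ((c : ℂ) • outer v) *ᵥ (w - a • v) = ((0 : ℝ) : ℂ) • (w - a • v) := by
    simp [smul_mulVec, outer_mulVec, dotProduct_sub, hv, a]
  have hpar : ((c : ℂ) • outer v) *ᵥ v = (c : ℂ) • v := by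
    simp [smul_mulVec, outer_mulVec, hv]
  calc hermFun f ((c : ℂ) • outer v) *ᵥ w
      = hermFun f ((c : ℂ) • outer v) *ᵥ (w - a • v) + a • hermFun f ((c : ℂ) • outer v) *ᵥ v := by
        rw [← mulVec_smul, ← mulVec_add, sub_add_cancel]
    _ = (f c • outer v) *ᵥ w := by
        rw [hermFun_mulVec_of_mulVec_eq_smul hA f hperp, hermFun_mulVec_of_mulVec_eq_smul hA f hpar,
          hf, smul_mulVec, outer_mulVec, zero_smul, zero_add, smul_comm]

lemma isHermitian_hermFun_ofReal (g : ℝ → ℝ) (A : Matrix ι ι ℂ) :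
    (hermFun (fun x => (g x : ℂ)) A).IsHermitian := by
  unfold hermFun
  split_ifs with hA
  · rw [star_eq_conjTranspose]
    exact isHermitian_mul_mul_conjTranspose _
      (isHermitian_diagonal_of_self_adjoint _ (by ext; simp))
  · exact isHermitian_zero

lemma isHermitian_matSqrt (A : Matrix ι ι ℂ) : (matSqrt A).IsHermitian :=
  isHermitian_hermFun_ofReal Real.sqrt A

lemma matSqrt_smul_outer {v : ι → ℂ} (hv : star v ⬝ᵥ v = 1) (c : ℝ) :
    matSqrt ((c : ℂ) • outer v) = (√c : ℂ) • outer v :=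
  hermFun_smul_outer (by simp) hv c

lemma matSqrt_outer {v : ι → ℂ} (hv : star v ⬝ᵥ v = 1) : matSqrt (outer v) = outer v := by
  simpa using matSqrt_smul_outer hv 1

theorem fidelity_outer_of_mulVec_eq_smul {v : ι → ℂ} (hv : star v ⬝ᵥ v = 1)
    {σ : Matrix ι ι ℂ} (hσ : σ.IsHermitian) {μ : ℝ} (hμ : 0 ≤ μ)
    (hσv : σ *ᵥ v = (μ : ℂ) • v) : fidelity (outer v) σ = μ := by
  set S := matSqrt σ
  have hSv : S *ᵥ v = (√μ : ℂ) • v := hermFun_mulVec_of_mulVec_eq_smul hσ _ hσv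
  have hX : (outer v * S)ᴴ * (outer v * S) = (μ : ℂ) • outer v :=
    calc (outer v * S)ᴴ * (outer v * S) = Sᴴ * (outer v * outer v) * Sᴴᴴ := by
          rw [conjTranspose_mul, (isHermitian_outer v).eq, conjTranspose_conjTranspose]
          noncomm_ring
      _ = (μ : ℂ) • outer v := by
          rw [outer_mul_outer_self hv, mul_outer_mul_conjTranspose, (isHermitian_matSqrt σ).eq, hSv,
            outer_ofReal_smul, Real.sq_sqrt hμ]
  rw [fidelity, traceNorm, matSqrt_outer hv, hX, matSqrt_smul_outer hv, trace_smul, trace_outer, hv]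
  simp [Real.sq_sqrt hμ]

end SpectralCalculus

section TensorPower

variable {ι : Type*}

def tpowVec (u : ι → ℂ) (m : ℕ) : (Fin m → ι) → ℂ := fun f => ∏ i, u (f i)

lemma tpow_outer [Fintype ι] [DecidableEq ι] (u : ι → ℂ) (m : ℕ) :
    tpow (outer u) m = outer (tpowVec u m) := by
  ext f g
  simp only [tpow, outer, tpowVec, Finset.prod_mul_distrib, map_prod]

lemma star_tpowVec_dotProduct [Fintype ι] (u : ι → ℂ) (m : ℕ) :
    star (tpowVec u m) ⬝ᵥ tpowVec u m = (star u ⬝ᵥ u) ^ m := by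
  simp only [dotProduct, tpowVec, Pi.star_apply, star_prod, ← Finset.prod_mul_distrib]
  rw [← Fintype.prod_sum (fun (_ : Fin m) a => star (u a) * u a), Finset.prod_const,
    Finset.card_univ, Fintype.card_fin]

lemma tpowVec_comp_perm (u : ι → ℂ) {m : ℕ} (π : Equiv.Perm (Fin m)) (f : Fin m → ι) :
    tpowVec u m (f ∘ π) = tpowVec u m f :=
  Equiv.prod_comp π (fun i => u (f i))

lemma tpowVec_append (u : ι → ℂ) {k m : ℕ} (a : Fin k → ι) (b : Fin m → ι) :
    tpowVec u (k + m) (Fin.append a b) = tpowVec u k a * tpowVec u m b := by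
  simp [tpowVec, Fin.prod_univ_add]

end TensorPower

section SymmetricSubspace

variable {d m : ℕ}

lemma permMat_mulVec_tpowVec (π : Equiv.Perm (Fin m)) (u : Fin d → ℂ) :
    permMat d m π *ᵥ tpowVec u m = tpowVec u m := by
  ext f
  simp [permMat, mulVec, dotProduct, ite_mul, tpowVec_comp_perm]

lemma symProj_mulVec_tpowVec (u : Fin d → ℂ) : symProj d m *ᵥ tpowVec u m = tpowVec u m := by
  rw [symProj, smul_mulVec, sum_mulVec]
  simp only [permMat_mulVec_tpowVec, Finset.sum_const, Finset.card_univ, Fintype.card_perm,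
    Fintype.card_fin, ← Nat.cast_smul_eq_nsmul ℂ, smul_smul]
  rw [inv_mul_cancel₀ (by exact_mod_cast m.factorial_ne_zero), one_smul]

lemma conjTranspose_permMat (π : Equiv.Perm (Fin m)) : (permMat d m π)ᴴ = permMat d m π⁻¹ := by
  ext f g
  simp only [conjTranspose_apply, permMat, apply_ite star, star_one, star_zero]
  congr 1
  exact propext ⟨fun h => by simp [h, Function.comp_assoc],
    fun h => by simp [h, Function.comp_assoc]⟩

lemma isHermitian_symProj : (symProj d m).IsHermitian := by
  simp only [IsHermitian, symProj, conjTranspose_smul, conjTranspose_sum, conjTranspose_permMat]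
  congr 1
  · simp
  · exact Fintype.sum_equiv (Equiv.inv _) _ _ fun _ => rfl

end SymmetricSubspace

section ExtendId

variable {d : ℕ}

lemma extendId_append {k m : ℕ} (h : k ≤ k + m) (M : Matrix (Fin k → Fin d) (Fin k → Fin d) ℂ)
    (a b : Fin k → Fin d) (s t : Fin m → Fin d) :
    extendId h M (Fin.append a s) (Fin.append b t) = if s = t then M a b else 0 := by
  have hhead : ∀ (a : Fin k → Fin d) (s : Fin m → Fin d),
      (fun i => Fin.append a s (Fin.castLE h i)) = a :=
    fun a s => funext fun i => Fin.append_left a s i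
  have htail : (∀ i : Fin (k + m), k ≤ (i : ℕ) → Fin.append a s i = Fin.append b t i) ↔ s = t := by
    constructor
    · intro hst
      funext j
      simpa using hst (Fin.natAdd k j) (by simp)
    · rintro rfl i hi
      obtain ⟨j, rfl⟩ : ∃ j : Fin m, Fin.natAdd k j = i :=
        ⟨⟨i - k, by omega⟩, Fin.ext (by simp; omega)⟩
      simp
  simp only [extendId, hhead, htail]
  split_ifs <;> simp

lemma extendId_mulVec_append {k m : ℕ} (h : k ≤ k + m)
    (M : Matrix (Fin k → Fin d) (Fin k → Fin d) ℂ) (w : (Fin (k + m) → Fin d) → ℂ)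
    (a : Fin k → Fin d) (s : Fin m → Fin d) :
    (extendId h M *ᵥ w) (Fin.append a s) = ∑ b, M a b * w (Fin.append b s) := by
  rw [mulVec, dotProduct, ← (Fin.appendEquiv k m).sum_comp, Fintype.sum_prod_type]
  refine Finset.sum_congr rfl fun b _ => ?_
  change ∑ t, extendId h M (Fin.append a s) (Fin.append b t) * w (Fin.append b t) = _
  rw [Finset.sum_eq_single s (fun t _ hts => ?_) (by simp), extendId_append, if_pos rfl]
  rw [extendId_append, if_neg (Ne.symm hts), zero_mul]

lemma extendId_mulVec_tpowVec {k n : ℕ} (h : k ≤ n) {M : Matrix (Fin k → Fin d) (Fin k → Fin d) ℂ}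
    {u : Fin d → ℂ} {c : ℂ} (hM : M *ᵥ tpowVec u k = c • tpowVec u k) :
    extendId h M *ᵥ tpowVec u n = c • tpowVec u n := by
  obtain ⟨m, rfl⟩ := Nat.exists_eq_add_of_le h
  ext f
  obtain ⟨a, s, rfl⟩ : ∃ a s, Fin.append a s = f := ⟨_, _, Fin.append_castAdd_natAdd⟩
  have hMa := congrFun hM a
  simp only [mulVec, dotProduct, Pi.smul_apply, smul_eq_mul] at hMa
  simp only [extendId_mulVec_append, tpowVec_append, Pi.smul_apply, smul_eq_mul]
  rw [← mul_assoc, ← hMa, Finset.sum_mul]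
  simp only [mul_assoc]

lemma isHermitian_extendId {k n : ℕ} (h : k ≤ n) {M : Matrix (Fin k → Fin d) (Fin k → Fin d) ℂ}
    (hM : M.IsHermitian) : (extendId h M).IsHermitian := by
  ext f g
  simp only [conjTranspose_apply, extendId, star_mul', apply_ite star, star_one, star_zero,
    hM.apply]
  simp only [eq_comm]

end ExtendId

section Cloning

variable (d : ℕ) {k n : ℕ} (h : k ≤ n)

lemma isHermitian_uqcm {ω : Matrix (Fin k → Fin d) (Fin k → Fin d) ℂ} (hω : ω.IsHermitian) :
    (uqcm d h ω).IsHermitian := by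
  have hP : ∀ m, (symProj d m)ᴴ = symProj d m := fun m => isHermitian_symProj.eq
  have hinner : (symProj d k * ω * symProj d k).IsHermitian := by
    simpa only [hP] using isHermitian_mul_mul_conjTranspose (symProj d k) hω
  have houter :
      (symProj d n * extendId h (symProj d k * ω * symProj d k) * symProj d n).IsHermitian := by
    simpa only [hP] using
      isHermitian_mul_mul_conjTranspose (symProj d n) (isHermitian_extendId h hinner)
  exact houter.smul (by simp [IsSelfAdjoint])

lemma uqcm_tpow_outer_mulVec {u : Fin d → ℂ} (hu : star u ⬝ᵥ u = 1) :
    uqcm d h (tpow (outer u) k) *ᵥ tpowVec u n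
      = ((dsym d k / dsym d n : ℝ) : ℂ) • tpowVec u n := by
  have hvk : star (tpowVec u k) ⬝ᵥ tpowVec u k = 1 := by rw [star_tpowVec_dotProduct, hu, one_pow]
  have hinner : (symProj d k * tpow (outer u) k * symProj d k) *ᵥ tpowVec u k
      = (1 : ℂ) • tpowVec u k := by
    rw [tpow_outer, ← mulVec_mulVec, ← mulVec_mulVec, symProj_mulVec_tpowVec, outer_mulVec, hvk,
      one_smul, symProj_mulVec_tpowVec]
  rw [uqcm, smul_mulVec, ← mulVec_mulVec, ← mulVec_mulVec, symProj_mulVec_tpowVec,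
    extendId_mulVec_tpowVec h hinner, one_smul, symProj_mulVec_tpowVec]
  push_cast
  rfl

end Cloning

theorem uqcm_fidelity_bound_general
    (d k n : ℕ) (hkn : k ≤ n)
    (u : Fin d → ℂ) (hu : ∑ a, Complex.normSq (u a) = 1) :
    fidelity (tpow (outer u) n) (uqcm d hkn (tpow (outer u) k)) ≥
      (dsym d k : ℝ) / (dsym d n : ℝ) := by
  have hu' : star u ⬝ᵥ u = 1 := by
    simpa [dotProduct, Complex.normSq_eq_conj_mul_self] using congrArg (fun r : ℝ => (r : ℂ)) hu
  have hv : star (tpowVec u n) ⬝ᵥ tpowVec u n = 1 := by rw [star_tpowVec_dotProduct, hu', one_pow]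
  have hω : (tpow (outer u) k).IsHermitian := by
    rw [tpow_outer]
    exact isHermitian_outer _
  rw [tpow_outer u n, fidelity_outer_of_mulVec_eq_smul hv (isHermitian_uqcm d hkn hω)
    (by positivity) (uqcm_tpow_outer_mulVec d hkn hu')]

/-- **Werner's fidelity bound for the UQCM:**
`F(φ^{⊗n}, C_{k→n}(φ^{⊗k})) ≥ d[k]/d[n]` for every pure state `φ`. -/
theorem uqcm_fidelity_bound
    (d k n : ℕ) (hd : 1 ≤ d) (hk : 1 ≤ k) (hkn : k ≤ n)
    (u : Fin d → ℂ) (hu : ∑ a, Complex.normSq (u a) = 1) :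
    fidelity (tpow (outer u) n) (uqcm d hkn (tpow (outer u) k)) ≥
      (dsym d k : ℝ) / (dsym d n : ℝ) :=
  uqcm_fidelity_bound_general d k n hkn u hu
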